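/- For any BAN F: B^n → B^n with the simple sequential update schedule W = ({0},{1},...,{n-1}), the chromatic number of the INECC graph satisfies χ(G_INECC(F,W)) ≤ 2^{2n/3+2}. -/

import Mathlib

/-- A configuration of a Boolean automata network of size `n`. -/
abbrev Conf (n : ℕ) := Fin n → Bool

/-- `F_I`: update simultaneously exactly the automata in `I`. -/
def updSet {n : ℕ} (F : Conf n → Conf n) (I : Finset (Fin n)) (x : Conf n) : Conf n :=
  fun i => if i ∈ I then F x i else x i

/-- `W_{<j}`: union of the first `j` blocks of the schedule `W`. -/
def prefUnion {n : ℕ} (W : List (Finset (Fin n))) (j : ℕ) : Finset (Fin n) :=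
  (W.take j).foldr (· ∪ ·) ∅

/-- `W` is a block-sequential update schedule: an ordered partition of the automata. -/
def isSchedule {n : ℕ} (W : List (Finset (Fin n))) : Prop :=
  (∀ B ∈ W, B.Nonempty) ∧ W.Pairwise Disjoint ∧ W.foldr (· ∪ ·) ∅ = Finset.univ

/-- Confusable configurations: identical after updating the first `i` blocks, some `i ∈ [0,p]`. -/
def confusable {n : ℕ} (F : Conf n → Conf n) (W : List (Finset (Fin n))) (x x' : Conf n) : Prop :=
  ∃ i ≤ W.length, updSet F (prefUnion W i) x = updSet F (prefUnion W i) x'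

/-- `CC(x,x')`: the set of steps making `x` and `x'` confusable. -/
def CCset {n : ℕ} (F : Conf n → Conf n) (W : List (Finset (Fin n))) (x x' : Conf n) : Set ℕ :=
  {i | i ≤ W.length ∧ updSet F (prefUnion W i) x = updSet F (prefUnion W i) x'}

/-- The `G_NECC` graph: edges between non-equivalent confusable configurations. -/
def gnecc {n : ℕ} (F : Conf n → Conf n) (W : List (Finset (Fin n))) :
    SimpleGraph (Conf n) where
  Adj x x' := F x ≠ F x' ∧ confusable F W x x'
  symm := by
    constructor
    rintro x x' ⟨hne, i, hi, h⟩
    exact ⟨hne.symm, i, hi, h.symm⟩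
  loopless := by constructor; rintro x ⟨hne, _⟩; exact hne rfl

/-- `F^W`: apply the blocks of `W` sequentially. -/
def runSched {n : ℕ} (F : Conf n → Conf n) (W : List (Finset (Fin n))) (x : Conf n) : Conf n :=
  W.foldl (fun y B => updSet F B y) x

/-- `W(i)`: the index of the block of `W` containing `i`. -/
def stepOf {n : ℕ} (W : List (Finset (Fin n))) (i : Fin n) : ℕ :=
  W.findIdx (fun B => decide (i ∈ B))

/-- `W' ∈ E_h(W,V')`: `W'` extends `W`, preserving the update order via `h`. -/
def extendsSched {n m : ℕ} (W : List (Finset (Fin n))) (W' : List (Finset (Fin m)))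
    (h : Fin n → Fin m) : Prop :=
  ∀ i i' : Fin n, (stepOf W i ≤ stepOf W i' ↔ stepOf W' (h i) ≤ stepOf W' (h i'))

/-- `(F',W')` `h`-simulates `(F,[V])`: `φ_h ∘ F'^{W'} = F ∘ φ_h`. -/
def simulates {n m : ℕ} (F' : Conf m → Conf m) (W' : List (Finset (Fin m)))
    (F : Conf n → Conf n) (h : Fin n → Fin m) : Prop :=
  ∀ z : Conf m, (fun i => runSched F' W' z (h i)) = F (fun i => z (h i))

/-- `κ(F,W)`: minimal number of additional automata needed to simulate `(F,[V])`
with a schedule extending `W` order-preservingly. -/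
noncomputable def kappa {n : ℕ} (F : Conf n → Conf n) (W : List (Finset (Fin n))) : ℕ :=
  sInf {k | ∃ h : Fin n → Fin (n + k), Function.Injective h ∧
    ∃ W' : List (Finset (Fin (n + k))), isSchedule W' ∧ extendsSched W W' h ∧
      ∃ F' : Conf (n + k) → Conf (n + k), simulates F' W' F h}

/-- The simple sequential update schedule `({0},{1},…,{n-1})`. -/
def seqSched (n : ℕ) : List (Finset (Fin n)) := (List.finRange n).map (fun i => {i})

/-- The `G_INECC` graph: the quotient of `G_NECC` identifying configurations
with the same image; vertices are the images of `F`. -/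
def ginecc {n : ℕ} (F : Conf n → Conf n) (W : List (Finset (Fin n))) :
    SimpleGraph {y : Conf n // ∃ x, F x = y} where
  Adj y y' := ∃ x x', F x = y.1 ∧ F x' = y'.1 ∧ (gnecc F W).Adj x x'
  symm := by
    constructor
    rintro y y' ⟨x, x', h1, h2, h3⟩
    exact ⟨x', x, h2, h1, h3.symm⟩
  loopless := by
    constructor
    rintro y ⟨x, x', h1, h2, h3⟩
    exact h3.1 (h1.trans h2.symm)

/-!
Put `a = ⌊n/3⌋`. For the sequential schedule, `x` and `x'` are confusable at step `i` iff
`F x` and `F x'` agree below `i` and `x`, `x'` agree from `i` on. So if the image `y` has at most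
`2^a` preimages, a neighbour `y'` confused at a step `i ≤ a` is the image of one of at most
`2^a · 2^a` configurations agreeing with a preimage of `y` from `a` on, and one confused at a step
`i > a` agrees with `y` below `a`, leaving at most `2^(n-a)` choices. Images with more than `2^a`
preimages number fewer than `2^(n-a)`. Hence every set of vertices contains one with at most
`2^(2a) + 2^(n-a)` neighbours inside it, and greedy colouring needs at most
`2^(2a) + 2^(n-a) + 1 ≤ 2^(2n/3+2)` colours.
-/

open Finset

namespace SimpleGraph

variable {V : Type*} [Fintype V] [DecidableEq V] (G : SimpleGraph V) [DecidableRel G.Adj]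

theorem colorable_succ_of_degenerate (d : ℕ)
    (h : ∀ S : Finset V, S.Nonempty → ∃ v ∈ S, #{w ∈ S | G.Adj v w} ≤ d) :
    G.Colorable (d + 1) := by
  suffices ∀ S : Finset V, ∃ c : V → Fin (d + 1),
      (S : Set V).Pairwise fun v w => G.Adj v w → c v ≠ c w by
    obtain ⟨c, hc⟩ := this univ
    exact ⟨.mk c fun hvw => hc (mem_univ _) (mem_univ _) (G.ne_of_adj hvw) hvw⟩
  intro S
  induction S using Finset.strongInduction with
  | H S ih =>
  rcases S.eq_empty_or_nonempty with rfl | hS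
  · exact ⟨fun _ => 0, by simp⟩
  obtain ⟨v, hv, hdeg⟩ := h S hS
  obtain ⟨c, hc⟩ := ih _ (erase_ssubset hv)
  have hused : #({w ∈ S.erase v | G.Adj v w}.image c) < #(univ : Finset (Fin (d + 1))) := by
    calc _ ≤ #{w ∈ S.erase v | G.Adj v w} := card_image_le
      _ ≤ #{w ∈ S | G.Adj v w} := card_le_card (filter_subset_filter _ (erase_subset v S))
      _ < _ := by simpa using Nat.lt_succ_of_le hdeg
  obtain ⟨k, -, hk⟩ := exists_mem_notMem_of_card_lt_card hused
  refine ⟨Function.update c v k, ?_⟩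
  rw [← insert_erase hv, coe_insert, Set.pairwise_insert]
  refine ⟨fun a ha b hb hab hadj => ?_, fun b hb _ => ?_⟩
  · rw [Function.update_of_ne (ne_of_mem_erase ha), Function.update_of_ne (ne_of_mem_erase hb)]
    exact hc ha hb hab hadj
  · have hbv := ne_of_mem_erase hb
    have hfresh : G.Adj v b → k ≠ c b := fun hvb hkb =>
      hk (mem_image.2 ⟨b, mem_filter.2 ⟨hb, hvb⟩, hkb.symm⟩)
    simp only [Function.update_self, Function.update_of_ne hbv]
    exact ⟨hfresh, fun hbv' => (hfresh hbv'.symm).symm⟩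

end SimpleGraph

theorem card_le_pow_of_agree_on {ι β : Type*} [Fintype ι] [Fintype β] (P : ι → Prop)
    [DecidablePred P] (x : ι → β) {s : Finset (ι → β)}
    (hs : ∀ x' ∈ s, ∀ j, P j → x' j = x j) :
    #s ≤ Fintype.card β ^ #{j | ¬ P j} := by
  classical
  calc #s ≤ #(univ : Finset ({j // ¬ P j} → β)) := by
        refine card_le_card_of_injOn (fun x' j => x' j) (fun _ _ => mem_coe.2 (mem_univ _)) ?_
        intro x₁ hx₁ x₂ hx₂ h
        funext j
        by_cases hj : P j
        · rw [hs x₁ hx₁ j hj, hs x₂ hx₂ j hj]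
        · exact congrFun h ⟨j, hj⟩
    _ = _ := by rw [card_univ, Fintype.card_fun, Fintype.card_subtype]

theorem card_mul_succ_le_of_lt_card_fiber {α β : Type*} [Fintype α] [DecidableEq β]
    (g : α → β) (t : Finset β) (k : ℕ) (h : ∀ b ∈ t, k < #{a | g a = b}) :
    #t * (k + 1) ≤ Fintype.card α := by
  calc #t * (k + 1) = ∑ _b ∈ t, (k + 1) := by rw [sum_const, smul_eq_mul]
    _ ≤ ∑ b ∈ t, #{a | g a = b} := sum_le_sum h
    _ = #{a | g a ∈ t} := sum_card_fiberwise_eq_card_filter _ _ _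
    _ ≤ Fintype.card α := card_le_univ _

theorem mem_foldr_union {α : Type*} [DecidableEq α] (L : List (Finset α)) (a : α) :
    a ∈ L.foldr (· ∪ ·) ∅ ↔ ∃ B ∈ L, a ∈ B := by
  induction L with
  | nil => simp
  | cons B L ih => simp [ih]

theorem mem_prefUnion_seqSched {n i : ℕ} {j : Fin n} :
    j ∈ prefUnion (seqSched n) i ↔ (j : ℕ) < i := by
  simp only [prefUnion, seqSched, mem_foldr_union, ← List.map_take, List.mem_map,
    List.mem_take_iff_getElem, List.getElem_finRange, List.length_finRange]
  constructor
  · rintro ⟨_, ⟨_, ⟨k, hk, rfl⟩, rfl⟩, hj⟩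
    rw [mem_singleton.1 hj]
    simp only [Fin.val_cast]
    omega
  · intro hj
    exact ⟨{j}, ⟨j, ⟨j, by omega, by simp⟩, rfl⟩, mem_singleton_self j⟩

theorem updSet_seqSched_eq_iff {n : ℕ} (F : Conf n → Conf n) (i : ℕ) (x x' : Conf n) :
    updSet F (prefUnion (seqSched n) i) x = updSet F (prefUnion (seqSched n) i) x' ↔
      (∀ j : Fin n, (j : ℕ) < i → F x j = F x' j) ∧
        (∀ j : Fin n, i ≤ (j : ℕ) → x j = x' j) := by
  simp only [funext_iff, updSet, mem_prefUnion_seqSched]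
  constructor
  · intro h
    exact ⟨fun j hj => by simpa [hj] using h j, fun j hj => by simpa [not_lt.2 hj] using h j⟩
  · rintro ⟨hlt, hge⟩ j
    by_cases hj : (j : ℕ) < i
    · simp [hj, hlt j hj]
    · simp [hj, hge j (not_lt.1 hj)]

section SequentialINECC

variable {n : ℕ} (F : Conf n → Conf n)

theorem ginecc_seqSched_adj_cases (a : ℕ) {y y' : {y : Conf n // ∃ x, F x = y}}
    (h : (ginecc F (seqSched n)).Adj y y') :
    (∃ x x', F x = y.1 ∧ F x' = y'.1 ∧ ∀ j : Fin n, a ≤ (j : ℕ) → x' j = x j) ∨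
      ∀ j : Fin n, (j : ℕ) < a → y'.1 j = y.1 j := by
  obtain ⟨x, x', hx, hx', -, i, -, hi⟩ := h
  obtain ⟨hlt, hge⟩ := (updSet_seqSched_eq_iff F i x x').1 hi
  rcases le_total i a with hia | hai
  · exact .inl ⟨x, x', hx, hx', fun j hj => (hge j (hia.trans hj)).symm⟩
  · exact .inr fun j hj => by rw [← hx, ← hx', hlt j (hj.trans_le hai)]

open scoped Classical in
theorem ginecc_seqSched_degree_le (a : ℕ) (y : {y : Conf n // ∃ x, F x = y})
    (hy : #{x | F x = y.1} ≤ 2 ^ a) :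
    (ginecc F (seqSched n)).degree y ≤ 2 ^ a * 2 ^ a + 2 ^ (n - a) := by
  let near := ({x | F x = y.1} : Finset (Conf n)).biUnion
    fun x => {x' : Conf n | ∀ j : Fin n, a ≤ (j : ℕ) → x' j = x j}
  let far : Finset {y : Conf n // ∃ x, F x = y} :=
    {y' | ∀ j : Fin n, (j : ℕ) < a → y'.1 j = y.1 j}
  have hsub : (ginecc F (seqSched n)).neighborFinset y ⊆
      near.image (fun x' => ⟨F x', x', rfl⟩) ∪ far := by
    intro y' hy'
    rcases ginecc_seqSched_adj_cases F a ((SimpleGraph.mem_neighborFinset _ _ _).1 hy') with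
      ⟨x, x', hx, hx', hagree⟩ | hagree
    · refine mem_union_left _ (mem_image.2 ⟨x', ?_, Subtype.ext hx'⟩)
      exact mem_biUnion.2 ⟨x, by simpa using hx, by simpa using hagree⟩
    · exact mem_union_right _ (by simpa [far] using hagree)
  have hnear : #near ≤ 2 ^ a * 2 ^ a := by
    refine (card_biUnion_le_card_mul _ _ (2 ^ a) fun x _ => ?_).trans (Nat.mul_le_mul_right _ hy)
    calc _ ≤ 2 ^ #{j : Fin n | ¬ a ≤ (j : ℕ)} :=
          card_le_pow_of_agree_on (fun j : Fin n => a ≤ (j : ℕ)) x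
            fun x' hx' => (mem_filter.1 hx').2
      _ ≤ 2 ^ a := by
          simp only [not_le, Fin.card_filter_val_lt]
          exact Nat.pow_le_pow_right two_pos (min_le_right n a)
  have hfar : #far ≤ 2 ^ (n - a) := by
    calc #far ≤ #{z : Conf n | ∀ j : Fin n, (j : ℕ) < a → z j = y.1 j} :=
          card_le_card_of_injOn Subtype.val (fun y' hy' => by simpa [far] using hy')
            Subtype.val_injective.injOn
      _ ≤ 2 ^ #{j : Fin n | ¬ (j : ℕ) < a} :=
          card_le_pow_of_agree_on (fun j : Fin n => (j : ℕ) < a) y.1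
            fun z hz => (mem_filter.1 hz).2
      _ = 2 ^ (n - a) := by
          rw [filter_not, card_sdiff_of_subset (filter_subset _ _), Fin.card_filter_val_lt,
            card_univ, Fintype.card_fin]
          congr 1
          omega
  calc (ginecc F (seqSched n)).degree y
      = #((ginecc F (seqSched n)).neighborFinset y) :=
        (SimpleGraph.card_neighborFinset_eq_degree _ _).symm
    _ ≤ #(near.image (fun x' => ⟨F x', x', rfl⟩) ∪ far) := card_le_card hsub
    _ ≤ 2 ^ a * 2 ^ a + 2 ^ (n - a) :=
        (card_union_le _ _).trans (add_le_add (card_image_le.trans hnear) hfar)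

open scoped Classical in
theorem ginecc_seqSched_degenerate (a : ℕ) (S : Finset {y : Conf n // ∃ x, F x = y})
    (hS : S.Nonempty) :
    ∃ y ∈ S, #{w ∈ S | (ginecc F (seqSched n)).Adj y w} ≤ 2 ^ a * 2 ^ a + 2 ^ (n - a) := by
  by_cases hsmall : ∃ y ∈ S, #{x | F x = y.1} ≤ 2 ^ a
  · obtain ⟨y, hyS, hy⟩ := hsmall
    refine ⟨y, hyS, le_trans ?_ (ginecc_seqSched_degree_le F a y hy)⟩
    rw [← SimpleGraph.card_neighborFinset_eq_degree, SimpleGraph.neighborFinset_eq_filter]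
    exact card_le_card (filter_subset_filter _ (subset_univ S))
  push Not at hsmall
  have hfibers : #S * (2 ^ a + 1) ≤ 2 ^ a * 2 ^ (n - a) := by
    calc #S * (2 ^ a + 1) ≤ Fintype.card (Conf n) :=
          card_mul_succ_le_of_lt_card_fiber (fun x => ⟨F x, x, rfl⟩) S (2 ^ a)
            fun y hy => by simpa only [Subtype.ext_iff] using hsmall y hy
      _ = 2 ^ n := by simp
      _ ≤ 2 ^ a * 2 ^ (n - a) := by
          rw [← pow_add]
          exact Nat.pow_le_pow_right two_pos (by omega)
  have hS_lt : #S < 2 ^ (n - a) := by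
    by_contra! h
    nlinarith [Nat.mul_le_mul_right (2 ^ a + 1) h, Nat.one_le_two_pow (n := n - a)]
  obtain ⟨y, hy⟩ := hS
  have hnot_self : #{w ∈ S | (ginecc F (seqSched n)).Adj y w} < #S :=
    card_lt_card (filter_ssubset.2 ⟨y, hy, (ginecc F (seqSched n)).loopless.irrefl y⟩)
  exact ⟨y, hy, by omega⟩

end SequentialINECC

theorem cast_two_pow_add_two_pow_add_one_le_rpow (n : ℕ) :
    ((2 ^ (n / 3) * 2 ^ (n / 3) + 2 ^ (n - n / 3) + 1 : ℕ) : ℝ) ≤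
      (2 : ℝ) ^ (2 * (n : ℝ) / 3 + 2) := by
  have two_pow_le (k : ℕ) (e : ℝ) (hk : (k : ℝ) ≤ e) : (2 : ℝ) ^ k ≤ 2 ^ e := by
    rw [← Real.rpow_natCast]
    exact Real.rpow_le_rpow_of_exponent_le one_le_two hk
  have hthird : ((n / 3 : ℕ) : ℝ) * 3 ≤ n ∧ (n : ℝ) ≤ (n / 3 : ℕ) * 3 + 2 := by
    constructor <;> norm_cast <;> omega
  set R := (2 : ℝ) ^ (2 * (n : ℝ) / 3)
  have h₁ : (2 : ℝ) ^ (n / 3) * 2 ^ (n / 3) ≤ R := by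
    rw [← pow_add]
    exact two_pow_le _ _ (by push_cast; linarith)
  have h₂ : (2 : ℝ) ^ (n - n / 3) ≤ 2 * R := by
    calc (2 : ℝ) ^ (n - n / 3) ≤ 2 ^ (2 * (n : ℝ) / 3 + 1) :=
          two_pow_le _ _ (by rw [Nat.cast_sub (Nat.div_le_self n 3)]; linarith)
      _ = 2 * R := by rw [Real.rpow_add two_pos, Real.rpow_one, mul_comm]
  have h₃ : 1 ≤ R := Real.one_le_rpow one_le_two (by positivity)
  calc ((2 ^ (n / 3) * 2 ^ (n / 3) + 2 ^ (n - n / 3) + 1 : ℕ) : ℝ) ≤ 4 * R := by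
        push_cast; linarith
    _ = (2 : ℝ) ^ (2 * (n : ℝ) / 3 + 2) := by
        rw [Real.rpow_add two_pos, Real.rpow_two]; ring

theorem stmt7 {n : ℕ} (F : Conf n → Conf n) :
    (((ginecc F (seqSched n)).chromaticNumber.toNat : ℝ)) ≤
      (2 : ℝ) ^ (2 * (n : ℝ) / 3 + 2) := by
  classical
  have hcol := (ginecc F (seqSched n)).colorable_succ_of_degenerate _
    (ginecc_seqSched_degenerate F (n / 3))
  exact (Nat.cast_le.2 (ENat.toNat_le_of_le_natCast hcol.chromaticNumber_le)).trans
    (cast_two_pow_add_two_pow_add_one_le_rpow n)
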